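/- Reduction from Orthogonal Vectors to wildcard pattern matching: for binary vectors U, V ∈ {0,1}^d, define U' over {0, ?} by U'_h = 0 if U_h = 1 and U'_h = ? if U_h = 0. Then the pattern #U'# matches the string #V# (with ? matching any single symbol, # a fresh delimiter, and matching defined position-wise on strings of equal length d+2) if and only if U and V are orthogonal, i.e., Σ_{h=1}^d U_h·V_h = 0. -/
import Mathlib


/-- Text alphabet for the Orthogonal Vectors reduction: `0`, `1`, and the delimiter `#`. -/
inductive OVSym : Type
  | z : OVSym  -- the symbol 0
  | o : OVSym  -- the symbol 1
  | h : OVSym  -- the delimiter #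
deriving DecidableEq

/-- OV gadget: for `U, V ∈ {0,1}^d`, mask `U` into `U'` over `{0,?}` by `1 ↦ 0`, `0 ↦ ?`
(wildcard `?` encoded as `none`). Then the pattern `#U'#` matches the string `#V#`
position-wise (with `?` matching anything) iff `U` and `V` are orthogonal. -/
theorem ov_gadget (d : ℕ) (U V : Fin d → Bool)
    (P : ℕ → Option OVSym) (T : ℕ → OVSym)
    (hP0 : P 0 = some OVSym.h) (hPd : P (d + 1) = some OVSym.h)
    (hPmid : ∀ t : Fin d, P (t.val + 1) = if U t then some OVSym.z else none)
    (hT0 : T 0 = OVSym.h) (hTd : T (d + 1) = OVSym.h)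
    (hTmid : ∀ t : Fin d, T (t.val + 1) = if V t then OVSym.o else OVSym.z) :
    (∀ t < d + 2, P t = none ∨ P t = some (T t)) ↔
      ∀ t : Fin d, ¬(U t = true ∧ V t = true) := by
  constructor
  · intro h t ⟨hU, hV⟩
    have := h (t.val + 1) (by omega)
    rw [hPmid t, hTmid t, hU, hV] at this
    rcases this with h' | h' <;> simp at h'
  · intro h t ht
    rcases Nat.lt_or_ge t 1 with h1 | h1
    · interval_cases t
      right; rw [hP0, hT0]
    · rcases Nat.lt_or_ge t (d + 1) with h2 | h2
      · have hd : t - 1 < d := by omega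
        have heq : (⟨t - 1, hd⟩ : Fin d).val + 1 = t := by simp; omega
        have hP := hPmid ⟨t - 1, hd⟩
        have hT := hTmid ⟨t - 1, hd⟩
        rw [heq] at hP hT
        rw [hP, hT]
        cases hU : U ⟨t - 1, hd⟩ <;> simp
        cases hV : V ⟨t - 1, hd⟩
        · rfl
        · exact absurd ⟨hU, hV⟩ (h ⟨t - 1, hd⟩)
      · have : t = d + 1 := by omega
        subst this
        right; rw [hPd, hTd]
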